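/- arXiv:2407.16930 — 3 statements merged into one kernel-verified Lean document; each statement's English description precedes it below -/
import Mathlib

section
/- Let f : ℝ³ → ℂ be such that f and all its partial derivatives up to order N are continuous and integrable, and all partial derivatives of order N+1 are integrable. Then the inverse Fourier transform g(x) = ∫ f(k) e^{i k·x} dk/(2π)³ satisfies |g(x)| ≤ C |x|^{-(N+1)} for |x| ≥ 1 and some constant C. -/
/-!
Up to the factor `(2π)⁻³`, `g x` is Mathlib's Fourier transform `𝓕 f` evaluated at `-x / (2π)`.
Integrating by parts `N + 1` times, `‖w‖ ^ (N + 1) * ‖𝓕 f w‖` is bounded by the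
`L¹` norms of the derivatives of `f` of order at most `N + 1`.
-/

open MeasureTheory Real FourierTransform RealInnerProductSpace

variable {V : Type*} [NormedAddCommGroup V] [InnerProductSpace ℝ V] [FiniteDimensional ℝ V]
  [MeasurableSpace V] [BorelSpace V]

lemma integral_mul_exp_inner_eq_fourier (f : V → ℂ) (x : V) :
    ∫ k, f k * Complex.exp (Complex.I * ((⟪k, x⟫ : ℝ) : ℂ)) = 𝓕 f ((-(2 * π)⁻¹) • x) := by
  rw [Real.fourier_eq']
  congr 1 with k
  rw [real_inner_smul_right, show -2 * π * (-(2 * π)⁻¹ * ⟪k, x⟫) = ⟪k, x⟫ by field_simp,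
    smul_eq_mul, mul_comm, mul_comm Complex.I]

lemma exists_pow_mul_norm_fourier_le {E : Type*} [NormedAddCommGroup E] [NormedSpace ℂ E]
    {n : ℕ} {f : V → E} (hf : ContDiff ℝ n f)
    (hint : ∀ i ≤ n, Integrable (iteratedFDeriv ℝ i f)) :
    ∃ C, ∀ w, ‖w‖ ^ n * ‖𝓕 f w‖ ≤ C := by
  have hint' : ∀ k i : ℕ, (k : ℕ∞) ≤ 0 → (i : ℕ∞) ≤ n →
      Integrable (fun v ↦ ‖v‖ ^ k * ‖iteratedFDeriv ℝ i f v‖) := by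
    intro k i hk hi
    obtain rfl : k = 0 := by exact_mod_cast nonpos_iff_eq_zero.mp hk
    simpa using (hint i (by exact_mod_cast hi)).norm
  have hbound := fun w ↦ pow_mul_norm_iteratedFDeriv_fourier_le (k := 0) hf hint' le_rfl le_rfl w
  simp only [norm_iteratedFDeriv_zero] at hbound
  exact ⟨_, hbound⟩

lemma exists_pow_mul_norm_integral_mul_exp_inner_le {n : ℕ} {f : V → ℂ} (hf : ContDiff ℝ n f)
    (hint : ∀ i ≤ n, Integrable (iteratedFDeriv ℝ i f)) :
    ∃ C, ∀ x : V, ‖x‖ ^ n * ‖∫ k, f k * Complex.exp (Complex.I * ((⟪k, x⟫ : ℝ) : ℂ))‖ ≤ C := by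
  obtain ⟨C, hC⟩ := exists_pow_mul_norm_fourier_le hf hint
  refine ⟨(2 * π) ^ n * C, fun x ↦ ?_⟩
  have h2π : 0 < 2 * π := by positivity
  have hnorm : ‖x‖ = 2 * π * ‖(-(2 * π)⁻¹) • x‖ := by
    rw [norm_smul, norm_neg, norm_inv, Real.norm_of_nonneg h2π.le, mul_inv_cancel_left₀ h2π.ne']
  rw [integral_mul_exp_inner_eq_fourier, hnorm, mul_pow, mul_assoc]
  exact mul_le_mul_of_nonneg_left (hC _) (by positivity)

theorem fourier_decay_power_law (N : ℕ) (f : EuclideanSpace ℝ (Fin 3) → ℂ)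
    (hf : ContDiff ℝ (N + 1 : ℕ) f)
    (hint : ∀ i ≤ N + 1, Integrable (fun k => iteratedFDeriv ℝ i f k)) :
    ∃ C : ℝ, ∀ x : EuclideanSpace ℝ (Fin 3), 1 ≤ ‖x‖ →
      ‖(1 / (2 * Real.pi) ^ 3 : ℂ) •
          ∫ k, f k * Complex.exp (Complex.I * ((inner ℝ k x : ℝ) : ℂ))‖ ≤
        C / ‖x‖ ^ (N + 1) := by
  obtain ⟨C, hC⟩ := exists_pow_mul_norm_integral_mul_exp_inner_le hf hint
  refine ⟨C / (2 * π) ^ 3, fun x hx ↦ ?_⟩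
  have hprefactor : ‖(1 / (2 * π) ^ 3 : ℂ)‖ = 1 / (2 * π) ^ 3 := by
    norm_cast
    exact Real.norm_of_nonneg (by positivity)
  rw [norm_smul, hprefactor, le_div_iff₀ (by positivity), div_mul_eq_mul_div, one_mul,
    div_mul_eq_mul_div, mul_comm]
  gcongr
  exact hC x
end

section
/- Let F : ℝ → ℂ be continuous, periodic considerations aside, and suppose F is integrable on ℝ with integrable Fourier transform. If F is N-times continuously differentiable with all derivatives up to order N integrable and derivative of order N+1 integrable, then |(1/L) Σ_{n∈ℤ} F(2πn/L) − (1/(2π)) ∫_ℝ F(k) dk| ≤ C/L^{N+1} for L ≥ 1 and some constant C. -/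
/-!
Write `A_h f x = h⁻¹ ∫_x^{x+h} f` for the moving average and `E_h f = h ∑_{n ∈ ℤ} f (n h) - ∫ f`
for the error of the Riemann sum with step `h`. On each cell `(n h, n h + h]` the fundamental
theorem of calculus gives `‖E_h f‖ ≤ h ‖f'‖₁`. The samples of `A_h f` are the cell integrals of `f`,
so its Riemann sum is exactly `∫ f`, which is also its integral; hence `E_h f = E_h (f - A_h f)`.
Since `A_h` commutes with differentiation and `‖g - A_h g‖₁ ≤ h ‖g'‖₁`, passing from `f` to
`f - A_h f` trades one derivative for a factor `h`, and induction gives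
`‖E_h f‖ ≤ h ^ (N + 1) ‖f^(N+1)‖₁`. The theorem is the case `h = 2π / L`.
-/

open MeasureTheory Set

lemma integrable_comp_fst_add_snd {E : Type*} [NormedAddCommGroup E] {f : ℝ → E}
    (μ : Measure ℝ) [IsFiniteMeasure μ] (hf : Integrable f) :
    Integrable (fun p : ℝ × ℝ => f (p.1 + p.2)) (μ.prod volume) := by
  have hmeas : AEStronglyMeasurable (fun p : ℝ × ℝ => f (p.1 + p.2)) (μ.prod volume) :=
    hf.aestronglyMeasurable.comp_quasiMeasurePreserving (quasiMeasurePreserving_add μ volume)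
  refine (integrable_prod_iff hmeas).2 ⟨.of_forall fun s => hf.comp_add_left s, ?_⟩
  simp_rw [integral_add_left_eq_self (fun x => ‖f x‖)]
  exact integrable_const _

variable {E : Type*} [NormedAddCommGroup E] [NormedSpace ℝ E] {f : ℝ → E} {h : ℝ}

lemma hasSum_setIntegral_Ioc_int_mul (hh : 0 < h) (hf : Integrable f) :
    HasSum (fun n : ℤ => ∫ t in Ioc (n * h) (n * h + h), f t) (∫ t, f t) := by
  have := hasSum_integral_iUnion (fun _ => measurableSet_Ioc) (pairwise_disjoint_Ioc_zsmul h)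
    (f := f) (by rw [iUnion_Ioc_zsmul hh]; exact hf.integrableOn)
  rw [iUnion_Ioc_zsmul hh, setIntegral_univ] at this
  simpa only [zsmul_eq_mul, Int.cast_add, Int.cast_one, add_one_mul] using this

noncomputable def riemannSum (h : ℝ) (f : ℝ → E) : E := h • ∑' n : ℤ, f (n * h)

noncomputable def movingAverage (h : ℝ) (f : ℝ → E) (x : ℝ) : E :=
  h⁻¹ • ∫ t in Ioc x (x + h), f t

lemma movingAverage_eq_setIntegral_Ioc_zero (hh : 0 ≤ h) (x : ℝ) :
    movingAverage h f x = h⁻¹ • ∫ s in Ioc 0 h, f (s + x) := by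
  rw [movingAverage, ← intervalIntegral.integral_of_le (by linarith),
    ← intervalIntegral.integral_of_le hh, intervalIntegral.integral_comp_add_right, zero_add,
    add_comm h x]

lemma integrable_movingAverage (hh : 0 ≤ h) (hf : Integrable f) :
    Integrable (movingAverage h f) := by
  have := (integrable_comp_fst_add_snd (volume.restrict (Ioc 0 h)) hf).integral_prod_right
  rw [funext (movingAverage_eq_setIntegral_Ioc_zero (f := f) hh)]
  exact this.smul h⁻¹

lemma riemannSum_movingAverage (hh : 0 < h) (hf : Integrable f) :
    riemannSum h (movingAverage h f) = ∫ x, f x := by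
  simp only [riemannSum, movingAverage]
  rw [((hasSum_setIntegral_Ioc_int_mul hh hf).const_smul h⁻¹).tsum_eq, smul_smul,
    mul_inv_cancel₀ hh.ne', one_smul]

variable [CompleteSpace E]

lemma integral_movingAverage (hh : 0 < h) (hf : Integrable f) :
    ∫ x, movingAverage h f x = ∫ x, f x := by
  have hswap := integral_integral_swap (μ := volume.restrict (Ioc 0 h)) (ν := volume)
    (f := fun s x => f (s + x)) (integrable_comp_fst_add_snd _ hf)
  simp only [integral_add_left_eq_self] at hswap
  rw [setIntegral_const, Real.volume_real_Ioc_of_le hh.le, sub_zero] at hswap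
  rw [funext (movingAverage_eq_setIntegral_Ioc_zero (f := f) hh.le), integral_smul, ← hswap,
    smul_smul, inv_mul_cancel₀ hh.ne', one_smul]

lemma norm_sub_le_setIntegral_norm_deriv (hf : ContDiff ℝ 1 f) {a b x : ℝ}
    (hx : x ∈ Icc a b) : ‖f x - f a‖ ≤ ∫ t in Ioc a b, ‖deriv f t‖ := by
  obtain ⟨hd, hc⟩ := contDiff_one_iff_deriv.1 hf
  rw [← intervalIntegral.integral_deriv_eq_sub (fun y _ => hd y) (hc.intervalIntegrable _ _),
    ← intervalIntegral.integral_of_le (hx.1.trans hx.2)]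
  calc ‖∫ t in a..x, deriv f t‖ ≤ ∫ t in a..x, ‖deriv f t‖ :=
        intervalIntegral.norm_integral_le_integral_norm hx.1
    _ ≤ ∫ t in a..b, ‖deriv f t‖ :=
        intervalIntegral.integral_mono_interval le_rfl hx.1 hx.2
          (Filter.Eventually.of_forall fun _ => norm_nonneg _) (hc.norm.intervalIntegrable _ _)

lemma norm_smul_sub_setIntegral_Ioc_le (hf : ContDiff ℝ 1 f) (a : ℝ) (hh : 0 ≤ h) :
    ‖h • f a - ∫ t in Ioc a (a + h), f t‖ ≤ h * ∫ t in Ioc a (a + h), ‖deriv f t‖ := by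
  have hvol : volume.real (Ioc a (a + h)) = h := by simp [hh]
  have hfin : volume (Ioc a (a + h)) < ⊤ := measure_Ioc_lt_top
  have hsub : h • f a - ∫ t in Ioc a (a + h), f t = ∫ t in Ioc a (a + h), (f a - f t) := by
    rw [integral_sub (integrableOn_const (s := Ioc a (a + h)) (C := f a) hfin.ne)
      hf.continuous.integrableOn_Ioc, setIntegral_const, hvol]
  rw [hsub, mul_comm]
  calc _ ≤ (∫ t in Ioc a (a + h), ‖deriv f t‖) * volume.real (Ioc a (a + h)) :=
        norm_setIntegral_le_of_norm_le_const hfin fun t ht => by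
          rw [norm_sub_rev]
          exact norm_sub_le_setIntegral_norm_deriv hf (Ioc_subset_Icc_self ht)
    _ = _ := by rw [hvol]

lemma summable_comp_int_mul (hf : ContDiff ℝ 1 f) (hfi : Integrable f)
    (hf'i : Integrable (deriv f)) (hh : 0 < h) : Summable fun n : ℤ => f (n * h) := by
  refine .of_norm <| .of_nonneg_of_le (fun _ => norm_nonneg _) (fun n => ?_)
    (((hasSum_setIntegral_Ioc_int_mul hh hfi.norm).summable.mul_left h⁻¹).add
      (hasSum_setIntegral_Ioc_int_mul hh hf'i.norm).summable)
  have hcell := norm_smul_sub_setIntegral_Ioc_le hf (n * h) hh.le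
  have hint := norm_integral_le_integral_norm
    (μ := volume.restrict (Ioc (n * h) (n * h + h))) f
  rw [← mul_le_mul_iff_right₀ hh, mul_add, ← mul_assoc, mul_inv_cancel₀ hh.ne', one_mul]
  calc h * ‖f (n * h)‖ = ‖h • f (n * h)‖ := by rw [norm_smul, Real.norm_of_nonneg hh.le]
    _ ≤ ‖∫ t in Ioc (n * h) (n * h + h), f t‖
          + ‖h • f (n * h) - ∫ t in Ioc (n * h) (n * h + h), f t‖ := norm_le_insert' _ _
    _ ≤ _ := add_le_add hint hcell

lemma norm_riemannSum_sub_integral_le (hf : ContDiff ℝ 1 f) (hfi : Integrable f)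
    (hf'i : Integrable (deriv f)) (hh : 0 < h) :
    ‖riemannSum h f - ∫ x, f x‖ ≤ h * ∫ x, ‖deriv f x‖ := by
  have hdiff := ((summable_comp_int_mul hf hfi hf'i hh).hasSum.const_smul h).sub
    (hasSum_setIntegral_Ioc_int_mul hh hfi)
  rw [riemannSum, ← hdiff.tsum_eq]
  exact tsum_of_norm_bounded ((hasSum_setIntegral_Ioc_int_mul hh hf'i.norm).mul_left h)
    fun n => norm_smul_sub_setIntegral_Ioc_le hf (n * h) hh.le

lemma hasDerivAt_movingAverage (hf : Continuous f) (hh : 0 ≤ h) (x : ℝ) :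
    HasDerivAt (movingAverage h f) (h⁻¹ • (f (x + h) - f x)) x := by
  have hprim : ∀ y, HasDerivAt (fun y => ∫ t in (0 : ℝ)..y, f t) (f y) y := fun y =>
    (hf.integral_hasStrictDerivAt 0 y).hasDerivAt
  have hdiff : movingAverage h f =
      fun y => h⁻¹ • ((∫ t in (0 : ℝ)..y + h, f t) - ∫ t in (0 : ℝ)..y, f t) := by
    ext y
    rw [movingAverage, intervalIntegral.integral_interval_sub_left (hf.intervalIntegrable _ _)
      (hf.intervalIntegrable _ _), intervalIntegral.integral_of_le (by linarith)]
  rw [hdiff]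
  exact (((hprim (x + h)).comp_add_const x h).sub (hprim x)).const_smul h⁻¹

lemma deriv_movingAverage (hf : ContDiff ℝ 1 f) (hh : 0 ≤ h) :
    deriv (movingAverage h f) = movingAverage h (deriv f) := by
  obtain ⟨hd, hc⟩ := contDiff_one_iff_deriv.1 hf
  ext x
  rw [(hasDerivAt_movingAverage hf.continuous hh x).deriv, movingAverage,
    ← intervalIntegral.integral_of_le (by linarith),
    intervalIntegral.integral_deriv_eq_sub (fun y _ => hd y) (hc.intervalIntegrable _ _)]

lemma contDiff_movingAverage {k : ℕ} (hf : ContDiff ℝ k f) (hh : 0 ≤ h) :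
    ContDiff ℝ k (movingAverage h f) := by
  induction k generalizing f with
  | zero =>
    exact contDiff_zero.2 (Differentiable.continuous fun x =>
      (hasDerivAt_movingAverage hf.continuous hh x).differentiableAt)
  | succ k ih =>
    rw [Nat.cast_succ, contDiff_succ_iff_deriv] at hf ⊢
    obtain ⟨hd, -, hf'⟩ := hf
    refine ⟨fun x => (hasDerivAt_movingAverage hd.continuous hh x).differentiableAt, by simp, ?_⟩
    rw [deriv_movingAverage (contDiff_one_iff_deriv.2 ⟨hd, hf'.continuous⟩) hh]
    exact ih hf'

lemma iteratedDeriv_movingAverage {k : ℕ} (hf : ContDiff ℝ k f) (hh : 0 ≤ h) :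
    iteratedDeriv k (movingAverage h f) = movingAverage h (iteratedDeriv k f) := by
  induction k generalizing f with
  | zero => simp only [iteratedDeriv_zero]
  | succ k ih =>
    rw [Nat.cast_succ, contDiff_succ_iff_deriv] at hf
    obtain ⟨hd, -, hf'⟩ := hf
    rw [iteratedDeriv_succ', iteratedDeriv_succ',
      deriv_movingAverage (contDiff_one_iff_deriv.2 ⟨hd, hf'.continuous⟩) hh, ih hf']

lemma norm_sub_movingAverage_le (hf : ContDiff ℝ 1 f) (hh : 0 < h) (x : ℝ) :
    ‖f x - movingAverage h f x‖ ≤ h * movingAverage h (fun t => ‖deriv f t‖) x := by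
  have hsub : f x - movingAverage h f x = h⁻¹ • (h • f x - ∫ t in Ioc x (x + h), f t) := by
    rw [movingAverage, smul_sub, smul_smul, inv_mul_cancel₀ hh.ne', one_smul]
  rw [hsub, norm_smul, Real.norm_of_nonneg (inv_nonneg.2 hh.le), movingAverage, smul_eq_mul,
    ← mul_assoc, mul_inv_cancel₀ hh.ne', one_mul, inv_mul_le_iff₀ hh]
  exact norm_smul_sub_setIntegral_Ioc_le hf x hh.le

lemma integral_norm_sub_movingAverage_le (hf : ContDiff ℝ 1 f) (hfi : Integrable f)
    (hf'i : Integrable (deriv f)) (hh : 0 < h) :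
    ∫ x, ‖f x - movingAverage h f x‖ ≤ h * ∫ x, ‖deriv f x‖ := by
  rw [← integral_movingAverage hh hf'i.norm, ← integral_const_mul]
  exact integral_mono (hfi.sub (integrable_movingAverage hh.le hfi)).norm
    ((integrable_movingAverage hh.le hf'i.norm).const_mul h) (norm_sub_movingAverage_le hf hh)

lemma riemannSum_sub_integral_sub_movingAverage (hf : ContDiff ℝ 1 f) (hfi : Integrable f)
    (hf'i : Integrable (deriv f)) (hh : 0 < h) :
    riemannSum h (f - movingAverage h f) - ∫ x, (f - movingAverage h f) x =
      riemannSum h f - ∫ x, f x := by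
  have hsum : ∑' n : ℤ, (f - movingAverage h f) (n * h) =
      ∑' n : ℤ, f (n * h) - ∑' n : ℤ, movingAverage h f (n * h) :=
    (summable_comp_int_mul hf hfi hf'i hh).tsum_sub
      ((hasSum_setIntegral_Ioc_int_mul hh hfi).const_smul h⁻¹).summable
  rw [riemannSum, hsum, smul_sub, ← riemannSum, ← riemannSum, riemannSum_movingAverage hh hfi,
    Pi.sub_def, integral_sub hfi (integrable_movingAverage hh.le hfi),
    integral_movingAverage hh hfi]
  abel

lemma iteratedDeriv_sub_movingAverage {k : ℕ} (hf : ContDiff ℝ k f) (hh : 0 ≤ h) :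
    iteratedDeriv k (f - movingAverage h f) =
      iteratedDeriv k f - movingAverage h (iteratedDeriv k f) := by
  ext x
  rw [iteratedDeriv_sub hf.contDiffAt (contDiff_movingAverage hf hh).contDiffAt,
    iteratedDeriv_movingAverage hf hh, Pi.sub_apply]

theorem norm_riemannSum_sub_integral_le_pow (m : ℕ) (hf : ContDiff ℝ (m + 1 : ℕ) f)
    (hint : ∀ i ≤ m + 1, Integrable (iteratedDeriv i f)) (hh : 0 < h) :
    ‖riemannSum h f - ∫ x, f x‖ ≤ h ^ (m + 1) * ∫ x, ‖iteratedDeriv (m + 1) f x‖ := by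
  induction m generalizing f with
  | zero =>
    simpa [iteratedDeriv_one] using norm_riemannSum_sub_integral_le (by simpa using hf)
      (by simpa using hint 0 (by norm_num)) (by simpa using hint 1 le_rfl) hh
  | succ m ih =>
    have hfi : Integrable f := by simpa using hint 0 (by omega)
    have hf'i : Integrable (deriv f) := by simpa using hint 1 (by omega)
    have hfk : ∀ k ≤ m + 2, ContDiff ℝ k f := fun k hk => hf.of_le (by exact_mod_cast hk)
    have hg : ContDiff ℝ (m + 1 : ℕ) (f - movingAverage h f) :=
      (hfk _ (by omega)).sub (contDiff_movingAverage (hfk _ (by omega)) hh.le)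
    have hgint : ∀ i ≤ m + 1, Integrable (iteratedDeriv i (f - movingAverage h f)) := by
      intro i hi
      rw [iteratedDeriv_sub_movingAverage (hfk i (by omega)) hh.le]
      exact (hint i (by omega)).sub (integrable_movingAverage hh.le (hint i (by omega)))
    have htop : ∫ x, ‖iteratedDeriv (m + 1) (f - movingAverage h f) x‖ ≤
        h * ∫ x, ‖iteratedDeriv (m + 2) f x‖ := by
      rw [iteratedDeriv_sub_movingAverage (hfk _ (by omega)) hh.le,
        iteratedDeriv_succ (n := m + 1)]
      exact integral_norm_sub_movingAverage_le
        (contDiff_nat_succ_iff_contDiff_one_iteratedDeriv (𝕜 := ℝ).1 hf).2 (hint _ (by omega))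
        (by rw [← iteratedDeriv_succ]; exact hint _ le_rfl) hh
    calc ‖riemannSum h f - ∫ x, f x‖
        = ‖riemannSum h (f - movingAverage h f) - ∫ x, (f - movingAverage h f) x‖ := by
          rw [riemannSum_sub_integral_sub_movingAverage (hfk 1 (by omega)) hfi hf'i hh]
      _ ≤ h ^ (m + 1) * ∫ x, ‖iteratedDeriv (m + 1) (f - movingAverage h f) x‖ := ih hg hgint
      _ ≤ h ^ (m + 1) * (h * ∫ x, ‖iteratedDeriv (m + 2) f x‖) := by gcongr
      _ = h ^ (m + 2) * ∫ x, ‖iteratedDeriv (m + 2) f x‖ := by ring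

theorem poisson_summation_power_law_general (N : ℕ) (F : ℝ → ℂ)
    (hF : ContDiff ℝ (N + 1 : ℕ) F)
    (hint : ∀ i ≤ N + 1, Integrable (iteratedDeriv i F)) :
    ∃ C : ℝ, ∀ L : ℝ, 1 ≤ L →
      ‖(1 / (L : ℂ)) * ∑' n : ℤ, F (2 * Real.pi * n / L) -
          (1 / (2 * Real.pi) : ℂ) * ∫ k, F k‖ ≤ C / L ^ (N + 1) := by
  set M := ∫ x, ‖iteratedDeriv (N + 1) F x‖
  refine ⟨(2 * Real.pi) ^ N * M, fun L hL => ?_⟩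
  have hL0 : 0 < L := one_pos.trans_le hL
  have hh : 0 < 2 * Real.pi / L := by positivity
  have hrescale : (1 / (L : ℂ)) * ∑' n : ℤ, F (2 * Real.pi * n / L) -
      (1 / (2 * Real.pi) : ℂ) * ∫ k, F k =
        (2 * Real.pi)⁻¹ • (riemannSum (2 * Real.pi / L) F - ∫ k, F k) := by
    simp only [riemannSum, mul_div_assoc', mul_comm (_ : ℝ) (2 * Real.pi), Complex.real_smul]
    push_cast
    field_simp
  rw [hrescale, norm_smul, Real.norm_of_nonneg (by positivity)]
  calc (2 * Real.pi)⁻¹ * ‖riemannSum (2 * Real.pi / L) F - ∫ k, F k‖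
      ≤ (2 * Real.pi)⁻¹ * ((2 * Real.pi / L) ^ (N + 1) * M) := by
        gcongr
        exact norm_riemannSum_sub_integral_le_pow N hF hint hh
    _ = (2 * Real.pi) ^ N * M / L ^ (N + 1) := by
        rw [div_pow, pow_succ]
        field_simp

theorem poisson_summation_power_law (N : ℕ) (F : ℝ → ℂ)
    (hF : ContDiff ℝ (N + 1 : ℕ) F) (hF_int : Integrable F)
    (hint : ∀ i ≤ N + 1, Integrable (iteratedDeriv i F))
    (hfour : Integrable (FourierTransform.fourier F)) :
    ∃ C : ℝ, ∀ L : ℝ, 1 ≤ L →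
      ‖(1 / (L : ℂ)) * ∑' n : ℤ, F (2 * Real.pi * n / L) -
          (1 / (2 * Real.pi) : ℂ) * ∫ k, F k‖ ≤ C / L ^ (N + 1) :=
  poisson_summation_power_law_general N F hF hint
end

section
/- Suppose F : ℝ → ℂ extends to a function analytic on the strip |Im ζ| < a (a > 0), integrable on every horizontal line |Im ζ| = b with b < a, with uniform bound on these integrals. Then for every 0 < b < a there is C such that |(1/L) Σ_{n∈ℤ} F(2πn/L) − (1/(2π)) ∫_ℝ F(k) dk| ≤ C e^{−bL} for all L ≥ 1. -/
/-!
Shifting the contour of `∫ F x e^{-2πixξ} dx` to the line `Im z = -b sign ξ` gives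
`‖𝓕 F ξ‖ ≤ M e^{-2πb|ξ|}`; the vertical sides of the rectangles vanish along a sequence of widths
because their sizes form an integrable function of the abscissa. Poisson summation at spacing
`2π/L` turns the Riemann sum minus the integral into `(2π)⁻¹ ∑_{m ≠ 0} 𝓕 F (mL/2π)`, a geometric
series of ratio `e^{-bL}`. Mathlib's Poisson formula needs the integer translates of `F` to be
summable in sup norm on compacts, which follows from the integrability of `F` and of `F'`; the
latter comes from the Cauchy estimate for `G'` on discs of radius `a/2`, integrated along the real
axis by Fubini.
-/

open MeasureTheory Filter Set Topology
open scoped FourierTransform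

variable {E : Type*} [NormedAddCommGroup E]

theorem MeasureTheory.Integrable.exists_seq_tendsto_atTop_norm_tendsto_zero {f : ℝ → E}
    (hf : Integrable f) :
    ∃ R : ℕ → ℝ, Tendsto R atTop atTop ∧ Tendsto (fun n => ‖f (R n)‖) atTop (𝓝 0) := by
  have small : ∀ (x₀ ε : ℝ), 0 < ε → ∃ x ≥ x₀, ‖f x‖ < ε := by
    intro x₀ ε hε
    by_contra! h
    have : IntegrableOn (fun _ => ε) (Ici x₀) :=
      (hf.norm.integrableOn (s := Ici x₀)).mono' aestronglyMeasurable_const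
        ((ae_restrict_iff' measurableSet_Ici).2 (ae_of_all _ fun x hx => by
          simpa [abs_of_pos hε] using h x hx))
    simp [integrableOn_const_iff, hε.ne'] at this
  choose R hR hRf using fun n : ℕ => small n (1 / (n + 1)) Nat.one_div_pos_of_nat
  exact ⟨R, tendsto_atTop_mono hR tendsto_natCast_atTop_atTop,
    squeeze_zero (fun _ => norm_nonneg _) (fun n => (hRf n).le)
      tendsto_one_div_add_atTop_nhds_zero_nat⟩

section RealLine

variable [NormedSpace ℝ E]

theorem summable_intervalIntegral_intCast_sub_add {f : ℝ → E} (hf : Integrable f) (N : ℕ) :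
    Summable fun n : ℤ => ∫ x in (n - N : ℝ)..(n + N), f x := by
  have unit : ∀ k : ℕ, Summable fun n : ℤ => ∫ x in (n - N + k : ℝ)..(n - N + k + 1), f x := by
    intro k
    refine (hf.hasSum_intervalIntegral (k - N)).summable.congr fun n => ?_
    ring_nf
  refine (summable_sum fun k (_ : k ∈ Finset.range (2 * N)) => unit k).congr fun n => ?_
  have := intervalIntegral.sum_integral_adjacent_intervals (f := f) (μ := volume)
    (a := fun k : ℕ => (n - N + k : ℝ)) (n := 2 * N) fun k _ => hf.intervalIntegrable
  simp only [Nat.cast_add, Nat.cast_one, Nat.cast_zero, add_zero, ← add_assoc] at this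
  rw [this]
  push_cast
  ring_nf

variable [CompleteSpace E]

theorem norm_le_inv_mul_integral_norm_add_integral_norm_deriv {f f' : ℝ → E} {u v x : ℝ}
    (huv : u < v) (hf : ∀ t ∈ Icc u v, HasDerivAt f (f' t) t) (hf' : IntegrableOn f' (Icc u v))
    (hx : x ∈ Icc u v) :
    ‖f x‖ ≤ (v - u)⁻¹ * (∫ t in u..v, ‖f t‖) + ∫ t in u..v, ‖f' t‖ := by
  set B := ∫ t in u..v, ‖f' t‖
  have hfc : ContinuousOn f (Icc u v) := fun t ht => (hf t ht).continuousAt.continuousWithinAt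
  have near : ∀ y ∈ Icc u v, ‖f x‖ ≤ ‖f y‖ + B := by
    intro y hy
    have hsub : uIcc y x ⊆ Icc u v := uIcc_subset_Icc hy hx
    have ftc : ∫ t in y..x, f' t = f x - f y :=
      intervalIntegral.integral_eq_sub_of_hasDerivAt (fun t ht => hf t (hsub ht))
        ((hf'.mono_set hsub).intervalIntegrable)
    calc ‖f x‖ ≤ ‖f y‖ + ‖f x - f y‖ := norm_le_insert' _ _
      _ ≤ ‖f y‖ + B := by
        gcongr
        rw [← ftc, show B = ∫ t in Icc u v, ‖f' t‖ by
          rw [integral_Icc_eq_integral_Ioc, ← intervalIntegral.integral_of_le huv.le]]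
        refine intervalIntegral.norm_integral_le_integral_norm_uIoc.trans ?_
        exact setIntegral_mono_set (Integrable.norm hf')
          (ae_of_all _ fun _ => norm_nonneg _) (Ioc_subset_Icc_self.trans hsub).eventuallyLE
  have avg : (v - u) * ‖f x‖ ≤ (∫ t in u..v, ‖f t‖) + (v - u) * B := by
    have hfi : IntervalIntegrable (fun t => ‖f t‖) volume u v :=
      hfc.norm.intervalIntegrable_of_Icc huv.le
    have := intervalIntegral.integral_mono_on huv.le intervalIntegrable_const
      (hfi.add intervalIntegrable_const) near
    rwa [intervalIntegral.integral_const, intervalIntegral.integral_add hfi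
      intervalIntegrable_const, intervalIntegral.integral_const, smul_eq_mul, smul_eq_mul] at this
  have hvu : 0 < v - u := sub_pos.2 huv
  rw [inv_mul_eq_div, div_add' _ _ _ hvu.ne', le_div_iff₀ hvu]
  linarith

theorem ContinuousMap.summable_norm_restrict_comp_addRight_of_hasDerivAt {f : C(ℝ, E)}
    {f' : ℝ → E} (hf : ∀ x, HasDerivAt f (f' x) x) (hfi : Integrable f) (hf'i : Integrable f')
    (K : TopologicalSpace.Compacts ℝ) :
    Summable fun n : ℤ => ‖(f.comp (ContinuousMap.addRight (n : ℝ))).restrict K‖ := by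
  obtain ⟨ρ, hρ⟩ := K.isCompact.isBounded.subset_closedBall 0
  obtain ⟨N, hN⟩ := exists_nat_gt (max ρ 0)
  have hN0 : (0 : ℝ) < N := (le_max_right _ _).trans_lt hN
  have hK : (K : Set ℝ) ⊆ Icc (-N : ℝ) N := fun x hx => by
    have := abs_le.1 (mem_closedBall_zero_iff.1 (hρ hx))
    constructor <;> linarith [this.1, this.2, le_max_left ρ 0]
  have hle (n : ℤ) : (n - N : ℝ) ≤ n + N := by linarith
  refine Summable.of_nonneg_of_le (fun _ => norm_nonneg _) (fun n => ?_)
    (((summable_intervalIntegral_intCast_sub_add hfi.norm N).mul_left (2 * N : ℝ)⁻¹).add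
      (summable_intervalIntegral_intCast_sub_add hf'i.norm N))
  refine (ContinuousMap.norm_le _ (add_nonneg (mul_nonneg (by positivity)
    (intervalIntegral.integral_nonneg (hle n) fun _ _ => norm_nonneg _))
    (intervalIntegral.integral_nonneg (hle n) fun _ _ => norm_nonneg _))).2 fun ⟨x, hx⟩ => ?_
  have hxn : x + n ∈ Icc (n - N : ℝ) (n + N) := by
    have := hK hx
    constructor <;> linarith [this.1, this.2]
  have := norm_le_inv_mul_integral_norm_add_integral_norm_deriv (by linarith) (fun t _ => hf t)
    hf'i.integrableOn hxn
  rwa [show (n + N : ℝ) - (n - N) = 2 * N by ring] at this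

end RealLine

theorem Real.fourier_comp_mul_left [NormedSpace ℂ E] (f : ℝ → E) {c : ℝ} (hc : c ≠ 0) (w : ℝ) :
    𝓕 (fun x => f (c * x)) w = |c⁻¹| • 𝓕 f (w / c) := by
  simp_rw [Real.fourier_real_eq_integral_exp_smul]
  rw [← Measure.integral_comp_mul_left _ c]
  congr 2 with x
  field_simp

theorem Real.tsum_comp_mul_intCast_eq_tsum_fourier {f f' : ℝ → ℂ} (hf : ∀ x, HasDerivAt f (f' x) x)
    (hfi : Integrable f) (hf'i : Integrable f') {c : ℝ} (hc : 0 < c)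
    (hsum : Summable fun m : ℤ => 𝓕 f (m / c)) :
    ∑' n : ℤ, f (c * n) = c⁻¹ • ∑' m : ℤ, 𝓕 f (m / c) := by
  let g : C(ℝ, ℂ) := ⟨fun x => f (c * x), by
    have := continuous_iff_continuousAt.2 fun x => (hf x).continuousAt
    fun_prop⟩
  have hg (x : ℝ) : HasDerivAt g (c • f' (c * x)) x := by
    have := (hf (c * x)).scomp x ((hasDerivAt_id x).const_mul c)
    rwa [mul_one] at this
  have hfourier (m : ℤ) : 𝓕 (g : ℝ → ℂ) m = c⁻¹ • 𝓕 f (m / c) := by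
    rw [show (g : ℝ → ℂ) = fun x => f (c * x) from rfl, Real.fourier_comp_mul_left f hc.ne',
      abs_of_pos (inv_pos.2 hc)]
  have poisson := Real.tsum_eq_tsum_fourier
    (g.summable_norm_restrict_comp_addRight_of_hasDerivAt hg (hfi.comp_mul_left' hc.ne')
      ((hf'i.comp_mul_left' hc.ne').smul c))
    (by simpa only [hfourier] using hsum.const_smul c⁻¹) 0
  simp only [zero_add, QuotientAddGroup.mk_zero, fourier_eval_zero, mul_one, hfourier] at poisson
  rwa [tsum_const_smul'' c⁻¹] at poisson

theorem hasSum_pow_natAbs {q : ℝ} (hq0 : 0 ≤ q) (hq1 : q < 1) :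
    HasSum (fun m : ℤ => q ^ m.natAbs) ((1 + q) / (1 - q)) := by
  have hgeom := hasSum_geometric_of_lt_one hq0 hq1
  have hneg : HasSum (fun n : ℕ => q ^ (-((n : ℤ) + 1)).natAbs) (q * (1 - q)⁻¹) := by
    have e (n : ℕ) : q ^ (-((n : ℤ) + 1)).natAbs = q * q ^ n := by
      rw [show (-((n : ℤ) + 1)).natAbs = n + 1 by omega, pow_succ']
    simpa only [e] using hgeom.mul_left q
  convert HasSum.of_nat_of_neg_add_one (f := fun m : ℤ => q ^ m.natAbs) hgeom hneg using 1
  field_simp [(sub_pos.2 hq1).ne']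

theorem norm_tsum_sub_apply_zero_le [CompleteSpace E] {u : ℤ → E} {M q : ℝ} (hq0 : 0 ≤ q)
    (hq1 : q < 1) (hu : ∀ m, ‖u m‖ ≤ M * q ^ m.natAbs) :
    ‖∑' m, u m - u 0‖ ≤ 2 * M * q / (1 - q) := by
  have hv := (hasSum_pow_natAbs hq0 hq1).mul_left M
  have hsum : Summable u := Summable.of_norm_bounded hv.summable hu
  have := (hsum.hasSum.update 0 0).norm_le_of_bounded (hv.update 0 0) fun m => by
    rcases eq_or_ne m 0 with rfl | hm
    · simp
    · simpa [Function.update_of_ne hm] using hu m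
  convert this using 1
  · simp [sub_eq_neg_add]
  · field_simp [(sub_pos.2 hq1).ne']
    ring

open Real in
theorem riemannSum_sub_integral_eq_tsum_fourier {F F' : ℝ → ℂ}
    (hF : ∀ x, HasDerivAt F (F' x) x) (hFi : Integrable F) (hF'i : Integrable F') {L : ℝ}
    (hL : 0 < L) (hsum : Summable fun m : ℤ => 𝓕 F (m / (2 * π / L))) :
    (1 / (L : ℂ)) * ∑' n : ℤ, F (2 * π * n / L) - (1 / (2 * π) : ℂ) * ∫ k, F k =
      (2 * π)⁻¹ • (∑' m : ℤ, 𝓕 F (m / (2 * π / L)) - 𝓕 F 0) := by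
  have poisson := Real.tsum_comp_mul_intCast_eq_tsum_fourier hF hFi hF'i (by positivity) hsum
  have hF0 : 𝓕 F 0 = ∫ k, F k := by simp [Real.fourier_real_eq_integral_exp_smul]
  have hLc : (1 / (L : ℂ)) * (((2 * π / L)⁻¹ : ℝ) : ℂ) = ((2 * π)⁻¹ : ℝ) := by
    push_cast
    field_simp [Complex.ofReal_ne_zero.2 hL.ne']
  simp_rw [show ∀ n : ℤ, 2 * π * n / L = 2 * π / L * n from fun n => by ring, poisson, hF0,
    Complex.real_smul, ← mul_assoc, hLc]
  push_cast
  ring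

open Real in
theorem norm_riemannSum_sub_integral_le_of_fourier_decay {F F' : ℝ → ℂ}
    (hF : ∀ x, HasDerivAt F (F' x) x) (hFi : Integrable F) (hF'i : Integrable F')
    {M b : ℝ} (hb : 0 < b) (hdecay : ∀ ξ, ‖𝓕 F ξ‖ ≤ M * exp (-(2 * π * b * |ξ|)))
    {L : ℝ} (hL : 1 ≤ L) :
    ‖(1 / (L : ℂ)) * ∑' n : ℤ, F (2 * π * n / L) - (1 / (2 * π) : ℂ) * ∫ k, F k‖ ≤
      M / (π * (1 - exp (-b))) * exp (-b * L) := by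
  have hL0 : 0 < L := by linarith
  set q := exp (-b * L) with hq
  have hq0 : 0 ≤ q := (exp_pos _).le
  have hqb : q ≤ exp (-b) := exp_le_exp.2 (by nlinarith)
  have hq1 : q < 1 := hqb.trans_lt (exp_lt_one_iff.2 (by linarith))
  have hM : 0 ≤ M := nonneg_of_mul_nonneg_left ((norm_nonneg _).trans (hdecay 0)) (exp_pos _)
  have hu (m : ℤ) : ‖𝓕 F (m / (2 * π / L))‖ ≤ M * q ^ m.natAbs := by
    refine (hdecay _).trans_eq ?_
    rw [hq, ← exp_nat_mul, Nat.cast_natAbs, Int.cast_abs, abs_div,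
      abs_of_pos (show 0 < 2 * π / L by positivity)]
    field_simp
  have hsum : Summable fun m : ℤ => 𝓕 F (m / (2 * π / L)) :=
    Summable.of_norm_bounded ((hasSum_pow_natAbs hq0 hq1).mul_left M).summable hu
  rw [riemannSum_sub_integral_eq_tsum_fourier hF hFi hF'i hL0 hsum, norm_smul, norm_inv,
    Real.norm_of_nonneg two_pi_pos.le]
  calc (2 * π)⁻¹ * ‖∑' m : ℤ, 𝓕 F (m / (2 * π / L)) - 𝓕 F 0‖
      ≤ (2 * π)⁻¹ * (2 * M * q / (1 - q)) := by
        gcongr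
        simpa using norm_tsum_sub_apply_zero_le hq0 hq1 hu
    _ = M / π * q / (1 - q) := by field_simp
    _ ≤ M / π * q / (1 - exp (-b)) := by
        gcongr
        exact sub_pos.2 (exp_lt_one_iff.2 (by linarith))
    _ = M / (π * (1 - exp (-b))) * exp (-b * L) := by
        rw [hq]
        field_simp

section Strip

open Complex Metric

def HasStripL1Bound (G : ℂ → E) (a M : ℝ) : Prop :=
  ∀ y : ℝ, |y| < a → Integrable (fun x : ℝ => G (x + y * I)) ∧ ∫ x : ℝ, ‖G (x + y * I)‖ ≤ M

variable {G : ℂ → E} {a M : ℝ}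

theorem HasStripL1Bound.comp_add (hG : HasStripL1Bound G a M) {w : ℂ} (hw : |w.im| < a) :
    Integrable (fun x : ℝ => G (x + w)) ∧ ∫ x : ℝ, ‖G (x + w)‖ ≤ M := by
  have e (x : ℝ) : G (x + w) = G (↑(x + w.re) + w.im * I) := by
    nth_rewrite 1 [← re_add_im w]
    push_cast
    ring_nf
  simp_rw [e]
  exact ⟨(hG _ hw).1.comp_add_right w.re,
    (integral_add_right_eq_self (fun x : ℝ => ‖G (x + w.im * I)‖) w.re).trans_le (hG _ hw).2⟩

theorem HasStripL1Bound.integrable_prod (hG : HasStripL1Bound G a M)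
    (hc : ContinuousOn G {z | |z.im| < a}) {T : Set ℝ} (hT : MeasurableSet T)
    (hTfin : volume T ≠ ⊤) {φ : ℝ → ℂ} (hφ : Continuous φ)
    (hφT : ∀ t ∈ T, |(φ t).im| < a) :
    Integrable (fun p : ℝ × ℝ => G (p.2 + φ p.1)) ((volume.restrict T).prod volume) := by
  have hmeas : AEStronglyMeasurable (fun p : ℝ × ℝ => G (p.2 + φ p.1))
      ((volume.restrict T).prod volume) := by
    rw [← Measure.restrict_univ (μ := volume), Measure.prod_restrict]
    refine ContinuousOn.aestronglyMeasurable (hc.comp (by fun_prop) fun p hp => ?_)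
      (hT.prod MeasurableSet.univ)
    simpa using hφT p.1 hp.1
  refine (integrable_prod_iff hmeas).2 ⟨?_, ?_⟩
  · filter_upwards [ae_restrict_mem hT] with t ht
    exact (hG.comp_add (hφT t ht)).1
  · refine Integrable.mono' (integrableOn_const (C := M) hTfin) hmeas.norm.integral_prod_right' ?_
    filter_upwards [ae_restrict_mem hT] with t ht
    rw [Real.norm_of_nonneg (integral_nonneg fun _ => norm_nonneg _)]
    exact (hG.comp_add (hφT t ht)).2

variable [NormedSpace ℂ E]

theorem integral_add_mul_I_eq_of_differentiableOn {g : ℂ → E} {y₁ y₂ : ℝ} (hy : y₁ ≤ y₂)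
    (hd : DifferentiableOn ℂ g (im ⁻¹' Icc y₁ y₂))
    (h₁ : Integrable fun x : ℝ => g (x + y₁ * I)) (h₂ : Integrable fun x : ℝ => g (x + y₂ * I))
    (hprod : Integrable (fun p : ℝ × ℝ => g (p.2 + p.1 * I))
      ((volume.restrict (Ioc y₁ y₂)).prod volume)) :
    ∫ x : ℝ, g (x + y₁ * I) = ∫ x : ℝ, g (x + y₂ * I) := by
  set side : ℝ → E := fun x => ∫ t in y₁..y₂, g (x + t * I)
  set sp : ℝ → ℝ := fun x => ∫ t in Ioc y₁ y₂, ‖g (x + t * I)‖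
  have hsp : Integrable sp := hprod.swap.integral_norm_prod_left
  have hside (x : ℝ) : ‖side x‖ ≤ sp x := by
    simpa only [side, intervalIntegral.integral_of_le hy] using
      norm_integral_le_integral_norm (μ := volume.restrict (Ioc y₁ y₂)) fun t : ℝ => g (x + t * I)
  have rect (r : ℝ) : (∫ x in -r..r, g (x + y₁ * I)) - ∫ x in -r..r, g (x + y₂ * I) =
      I • side (-r) - I • side r := by
    have := integral_boundary_rect_eq_zero_of_differentiableOn g (-r + y₁ * I) (r + y₂ * I)
      (hd.mono fun z hz => by simpa [uIcc_of_le hy] using hz.2)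
    simp only [add_re, add_im, neg_re, neg_im, ofReal_re, ofReal_im, mul_re, mul_im, I_re, I_im,
      mul_zero, mul_one, sub_zero, zero_add, add_zero, neg_zero, ofReal_neg] at this
    rw [← sub_eq_zero, ← this]
    simp only [side, ofReal_neg]
    abel
  obtain ⟨R, hR, hRs⟩ := (hsp.add hsp.comp_neg).exists_seq_tendsto_atTop_norm_tendsto_zero
  have hlim : Tendsto
      (fun n => (∫ x in -R n..R n, g (x + y₁ * I)) - ∫ x in -R n..R n, g (x + y₂ * I)) atTop
      (𝓝 ((∫ x : ℝ, g (x + y₁ * I)) - ∫ x : ℝ, g (x + y₂ * I))) :=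
    (intervalIntegral_tendsto_integral h₁ (tendsto_neg_atTop_atBot.comp hR) hR).sub
      (intervalIntegral_tendsto_integral h₂ (tendsto_neg_atTop_atBot.comp hR) hR)
  refine sub_eq_zero.1 (tendsto_nhds_unique hlim (squeeze_zero_norm (fun n => ?_) hRs))
  rw [rect]
  calc ‖I • side (-R n) - I • side (R n)‖ ≤ ‖side (-R n)‖ + ‖side (R n)‖ := by
        simpa only [norm_smul, norm_I, one_mul] using norm_sub_le (I • side (-R n)) (I • side (R n))
    _ ≤ sp (R n) + sp (-R n) := by linarith [hside (R n), hside (-R n)]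
    _ ≤ ‖(sp + fun t => sp (-t)) (R n)‖ := Real.le_norm_self _

theorem HasStripL1Bound.integral_eq (hG : HasStripL1Bound G a M)
    (hd : DifferentiableOn ℂ G {z | |z.im| < a}) {y₁ y₂ : ℝ} (hy₁ : |y₁| < a) (hy₂ : |y₂| < a) :
    ∫ x : ℝ, G (x + y₁ * I) = ∫ x : ℝ, G (x + y₂ * I) := by
  wlog hy : y₁ ≤ y₂ generalizing y₁ y₂
  · exact (this hy₂ hy₁ (le_of_not_ge hy)).symm
  have hIcc : im ⁻¹' Icc y₁ y₂ ⊆ {z | |z.im| < a} := fun z hz =>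
    abs_lt.2 ⟨(neg_lt_of_abs_lt hy₁).trans_le hz.1, hz.2.trans_lt (lt_of_abs_lt hy₂)⟩
  refine integral_add_mul_I_eq_of_differentiableOn hy (hd.mono hIcc) (hG y₁ hy₁).1 (hG y₂ hy₂).1
    (hG.integrable_prod hd.continuousOn measurableSet_Ioc measure_Ioc_lt_top.ne
      (φ := fun t : ℝ => (t : ℂ) * I) (by fun_prop) fun t ht => ?_)
  simpa using hIcc (show (t * I).im ∈ Icc y₁ y₂ by simpa using Ioc_subset_Icc_self ht)

theorem HasStripL1Bound.smul {h : ℂ → ℂ} {K : ℝ} (hG : HasStripL1Bound G a M) (hh : Continuous h)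
    (hK : ∀ z : ℂ, |z.im| < a → ‖h z‖ ≤ K) : HasStripL1Bound (fun z => h z • G z) a (K * M) := by
  intro y hy
  have hKy (x : ℝ) : ‖h (x + y * I)‖ ≤ K := hK _ (by simpa using hy)
  have hbound (x : ℝ) : ‖h (x + y * I) • G (x + y * I)‖ ≤ K * ‖G (x + y * I)‖ := by
    rw [norm_smul]
    exact mul_le_mul_of_nonneg_right (hKy x) (norm_nonneg _)
  refine ⟨((hG y hy).1.norm.const_mul K).mono' (((hh.comp (by fun_prop)).aestronglyMeasurable).smul
    (hG y hy).1.aestronglyMeasurable) (ae_of_all _ hbound), ?_⟩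
  calc ∫ x : ℝ, ‖h (x + y * I) • G (x + y * I)‖ ≤ ∫ x : ℝ, K * ‖G (x + y * I)‖ :=
        integral_mono_of_nonneg (ae_of_all _ fun _ => norm_nonneg _)
          ((hG y hy).1.norm.const_mul K) (ae_of_all _ hbound)
    _ ≤ K * M := by
        rw [integral_const_mul]
        exact mul_le_mul_of_nonneg_left (hG y hy).2 ((norm_nonneg _).trans (hKy 0))

open Real in
theorem HasStripL1Bound.norm_fourier_le {F : ℝ → E} (hG : HasStripL1Bound G a M)
    (hd : DifferentiableOn ℂ G {z | |z.im| < a}) (hGF : ∀ x : ℝ, G x = F x) {β : ℝ} (hβ : 0 ≤ β)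
    (hβa : β < a) (ξ : ℝ) :
    ‖𝓕 F ξ‖ ≤ M * Real.exp (-(2 * π * β * |ξ|)) := by
  set e : ℂ → ℂ := fun z => cexp (-2 * π * ξ * z * I)
  have he (z : ℂ) : ‖e z‖ = Real.exp (2 * π * ξ * z.im) := by
    simp only [e, norm_exp]
    congr 1
    simp
  have hg : HasStripL1Bound (fun z => e z • G z) a (Real.exp (2 * π * |ξ| * a) * M) := by
    refine hG.smul (by fun_prop) fun z hz => ?_
    rw [he]
    refine Real.exp_le_exp.2 ?_
    have : ξ * z.im ≤ |ξ| * a :=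
      (le_abs_self _).trans ((abs_mul ξ z.im).trans_le (by gcongr))
    nlinarith [pi_pos]
  have hgd : DifferentiableOn ℂ (fun z => e z • G z) {z | |z.im| < a} :=
    (by fun_prop : Differentiable ℂ e).differentiableOn.smul hd
  have h0 : 𝓕 F ξ = ∫ x : ℝ, e (x + (0 : ℝ) * I) • G (x + (0 : ℝ) * I) := by
    rw [Real.fourier_real_eq_integral_exp_smul]
    congr with x
    simp only [e, ofReal_zero, zero_mul, add_zero, hGF]
    push_cast
    ring_nf
  obtain ⟨y, hy, hξy⟩ : ∃ y, |y| < a ∧ ξ * y = -(β * |ξ|) := by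
    rcases le_total 0 ξ with h | h
    · exact ⟨-β, by rwa [abs_neg, abs_of_nonneg hβ], by rw [abs_of_nonneg h]; ring⟩
    · exact ⟨β, by rwa [abs_of_nonneg hβ], by rw [abs_of_nonpos h]; ring⟩
  rw [h0, hg.integral_eq hgd (by simpa using hβ.trans_lt hβa) hy]
  calc ‖∫ x : ℝ, e (x + y * I) • G (x + y * I)‖
      ≤ ∫ x : ℝ, ‖e (x + y * I) • G (x + y * I)‖ := norm_integral_le_integral_norm _
    _ = Real.exp (2 * π * ξ * y) * ∫ x : ℝ, ‖G (x + y * I)‖ := by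
        simp_rw [norm_smul, he, ← integral_const_mul]
        simp
    _ ≤ Real.exp (2 * π * ξ * y) * M := by gcongr; exact (hG y hy).2
    _ = M * Real.exp (-(2 * π * β * |ξ|)) := by
        rw [mul_comm, show 2 * π * ξ * y = -(2 * π * β * |ξ|) by linear_combination 2 * π * hξy]

variable [CompleteSpace E]

open Real in
theorem DiffContOnCl.norm_deriv_le_integral_norm_circleMap {f : ℂ → E} {c : ℂ} {r : ℝ}
    (hr : 0 < r) (hf : DiffContOnCl ℂ f (ball c r)) :
    ‖deriv f c‖ ≤ (2 * π * r)⁻¹ * ∫ θ in 0..2 * π, ‖f (circleMap c r θ)‖ := by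
  have cauchy : deriv f c = (2 * π * I)⁻¹ • ∮ z in C(c, r), (1 / (z - c) ^ 2) • f z := by
    rw [hf.deriv_eq_smul_circleIntegral hr, smul_smul, inv_mul_cancel₀ two_pi_I_ne_zero,
      one_smul]
  rw [cauchy, norm_smul, circleIntegral]
  calc ‖(2 * π * I)⁻¹‖ * ‖∫ θ in 0..2 * π,
          deriv (circleMap c r) θ • (1 / (circleMap c r θ - c) ^ 2) • f (circleMap c r θ)‖
      ≤ ‖(2 * π * I)⁻¹‖ * ∫ θ in 0..2 * π,
          ‖deriv (circleMap c r) θ • (1 / (circleMap c r θ - c) ^ 2) • f (circleMap c r θ)‖ := by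
        gcongr
        exact intervalIntegral.norm_integral_le_integral_norm two_pi_pos.le
    _ = ‖(2 * π * I)⁻¹‖ * ∫ θ in 0..2 * π, r⁻¹ * ‖f (circleMap c r θ)‖ := by
        congr 1
        refine intervalIntegral.integral_congr fun θ _ => ?_
        simp only [deriv_circleMap, circleMap_sub_center, norm_smul, norm_mul, norm_circleMap_zero,
          norm_I, norm_div, norm_one, norm_pow, abs_of_pos hr]
        field_simp
    _ = (2 * π * r)⁻¹ * ∫ θ in 0..2 * π, ‖f (circleMap c r θ)‖ := by
        rw [intervalIntegral.integral_const_mul]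
        simp [abs_of_pos pi_pos]
        field_simp

open Real in
theorem HasStripL1Bound.integrable_deriv_comp_ofReal (hG : HasStripL1Bound G a M)
    (hd : DifferentiableOn ℂ G {z | |z.im| < a}) (ha : 0 < a) :
    Integrable fun x : ℝ => deriv G x := by
  set r := a / 2
  have hr : 0 < r := half_pos ha
  have hprod := hG.integrable_prod hd.continuousOn measurableSet_Ioc
    (measure_Ioc_lt_top (a := 0) (b := 2 * π)).ne (continuous_circleMap 0 r) fun θ _ =>
      calc |(circleMap 0 r θ).im| ≤ ‖circleMap 0 r θ‖ := abs_im_le_norm _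
        _ = r := by simp [abs_of_pos hr]
        _ < a := half_lt_self ha
  refine (hprod.swap.integral_norm_prod_left.const_mul (2 * π * r)⁻¹).mono'
    ((stronglyMeasurable_deriv G).comp_measurable measurable_ofReal).aestronglyMeasurable
    (ae_of_all _ fun x => ?_)
  have hball : closedBall (x : ℂ) r ⊆ {z | |z.im| < a} := fun z hz => by
    have : |(z - x).im| ≤ r := (abs_im_le_norm _).trans (mem_closedBall_iff_norm.1 hz)
    simp only [sub_im, ofReal_im, sub_zero] at this
    exact this.trans_lt (half_lt_self ha)
  have hdiff : DiffContOnCl ℂ G (ball (x : ℂ) r) :=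
    (hd.mono ((closure_ball _ hr.ne').trans_subset hball)).diffContOnCl
  refine (hdiff.norm_deriv_le_integral_norm_circleMap hr).trans_eq ?_
  rw [intervalIntegral.integral_of_le two_pi_pos.le]
  simp [circleMap]

end Strip

theorem poisson_summation_exponential_general (a : ℝ) (F : ℝ → ℂ) (G : ℂ → ℂ)
    (hG_an : AnalyticOnNhd ℂ G {ζ : ℂ | |ζ.im| < a})
    (hGF : ∀ x : ℝ, G (x : ℂ) = F x)
    (hline : ∀ b : ℝ, |b| < a → Integrable (fun k : ℝ => G ((k : ℂ) + (b : ℂ) * Complex.I)))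
    (hbound : ∃ M : ℝ, ∀ b : ℝ, |b| < a →
      (∫ k : ℝ, ‖G ((k : ℂ) + (b : ℂ) * Complex.I)‖) ≤ M) :
    ∀ b : ℝ, 0 < b → b < a → ∃ C : ℝ, ∀ L : ℝ, 1 ≤ L →
      ‖(1 / (L : ℂ)) * ∑' n : ℤ, F (2 * Real.pi * n / L) -
          (1 / (2 * Real.pi) : ℂ) * ∫ k, F k‖ ≤ C * Real.exp (-b * L) := by
  obtain ⟨M, hM⟩ := hbound
  intro b hb hba
  have ha : 0 < a := hb.trans hba
  have hG : HasStripL1Bound G a M := fun y hy => ⟨hline y hy, hM y hy⟩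
  have hd := hG_an.differentiableOn
  have hF (x : ℝ) : HasDerivAt F (deriv G x) x := by
    simpa only [hGF] using (hG_an x (by simpa using ha)).differentiableAt.hasDerivAt.comp_ofReal
  have hFi : Integrable F := by simpa [hGF] using (hG 0 (by simpa using ha)).1
  refine ⟨M / (Real.pi * (1 - Real.exp (-b))), fun L hL => ?_⟩
  exact norm_riemannSum_sub_integral_le_of_fourier_decay hF hFi
    (hG.integrable_deriv_comp_ofReal hd ha) hb (hG.norm_fourier_le hd hGF hb.le hba) hL

theorem poisson_summation_exponential (a : ℝ) (ha : 0 < a) (F : ℝ → ℂ) (G : ℂ → ℂ)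
    (hG_an : AnalyticOnNhd ℂ G {ζ : ℂ | |ζ.im| < a})
    (hGF : ∀ x : ℝ, G (x : ℂ) = F x)
    (hline : ∀ b : ℝ, |b| < a → Integrable (fun k : ℝ => G ((k : ℂ) + (b : ℂ) * Complex.I)))
    (hbound : ∃ M : ℝ, ∀ b : ℝ, |b| < a →
      (∫ k : ℝ, ‖G ((k : ℂ) + (b : ℂ) * Complex.I)‖) ≤ M) :
    ∀ b : ℝ, 0 < b → b < a → ∃ C : ℝ, ∀ L : ℝ, 1 ≤ L →
      ‖(1 / (L : ℂ)) * ∑' n : ℤ, F (2 * Real.pi * n / L) -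
          (1 / (2 * Real.pi) : ℂ) * ∫ k, F k‖ ≤ C * Real.exp (-b * L) :=
  poisson_summation_exponential_general a F G hG_an hGF hline hbound
end
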